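/- (Lemma 5.1, generator identity.) Let θ_i ∈ ℝ for i ∈ ℤ with every Z(θ_i) convergent, let μ^{(θ̲)} be the product probability measure on ℤ^ℤ with i-th marginal μ^{(θ_i)}, and let φ : ℤ^ℤ → ℝ be bounded and measurable, depending only on the coordinates ω_l, …, ω_r for some integers l ≤ r. Then ∑_{i=l−1}^{r} ∫ (r(ω_i)+r(−ω_{i+1}))·(φ(ω^{(i,i+1)}) − φ(ω)) dμ^{(θ̲)}(ω) = ∑_{i=l−1}^{r−1} (e^{θ_i} − e^{θ_{i+1}})·( ∫ φ(ω^{(i+1,+)}) dμ^{(θ̲)}(ω) − ∫ φ dμ^{(θ̲)} ) + ∑_{i=l+1}^{r+1} (e^{−θ_i} − e^{−θ_{i−1}})·( ∫ φ(ω^{(i−1,−)}) dμ^{(θ̲)}(ω) − ∫ φ dμ^{(θ̲)} ), all integrands being integrable. -/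

import Mathlib

open Real MeasureTheory

/-- The generalized factorial `r(z)! := ∏_{y=1}^{|z|} r(y)`. -/
noncomputable def rfact (r : ℤ → ℝ) (z : ℤ) : ℝ :=
  ∏ y ∈ Finset.range z.natAbs, r (y + 1)

/-- The partition function `Z(θ) := ∑_{z ∈ ℤ} e^{θ z} / r(z)!`. -/
noncomputable def Zfun (r : ℤ → ℝ) (θ : ℝ) : ℝ :=
  ∑' z : ℤ, Real.exp (θ * z) / rfact r z

/-- The single-site probability mass function `μ^{(θ)}(z) := e^{θ z} / (Z(θ) r(z)!)`. -/
noncomputable def mu (r : ℤ → ℝ) (θ : ℝ) (z : ℤ) : ℝ :=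
  Real.exp (θ * z) / (Zfun r θ * rfact r z)

/-- `ω^{(i,i+1)}`: a brick is laid on the column over `(i, i+1)`; coordinate `i`
decreases by one and coordinate `i+1` increases by one. -/
def brickCfg (ω : ℤ → ℤ) (i : ℤ) : ℤ → ℤ :=
  fun j => if j = i then ω i - 1 else if j = i + 1 then ω (i + 1) + 1 else ω j

/-- `ω^{(i,+)}`: only coordinate `i` is changed, to `ω i + 1`. -/
def upCfg (ω : ℤ → ℤ) (i : ℤ) : ℤ → ℤ := Function.update ω i (ω i + 1)

/-- `ω^{(i,-)}`: only coordinate `i` is changed, to `ω i - 1`. -/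
def downCfg (ω : ℤ → ℤ) (i : ℤ) : ℤ → ℤ := Function.update ω i (ω i - 1)

/-- `IsProductMeasure r η P` means: `P` is the product probability measure on `ℤ^ℤ`
whose `i`-th marginal is the single-site measure `μ^{(η i)}`, characterized by its
values on cylinder sets. -/
def IsProductMeasure (r : ℤ → ℝ) (η : ℤ → ℝ) (P : Measure (ℤ → ℤ)) : Prop :=
  IsProbabilityMeasure P ∧
    ∀ (s : Finset ℤ) (c : ℤ → ℤ),
      P {ω : ℤ → ℤ | ∀ i ∈ s, ω i = c i} = ∏ i ∈ s, ENNReal.ofReal (mu r (η i) (c i))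

open Function

/-!
The relation `r(z) r(1 - z) = 1` makes `r` act on the single-site law as a shift:
`r(z) μ^{(θ)}(z) = e^θ μ^{(θ)}(z - 1)` and `r(-z) μ^{(θ)}(z) = e^{-θ} μ^{(θ)}(z + 1)`.
For a bounded test function `F` of finitely many coordinates, integrals against the product
measure are absolutely convergent sums over the configurations of a finite window, and shifting
the summation index at site `k` turns these identities into
`E[r(ω_k) F(ω)] = e^{θ_k} E[F(ω^{(k,+)})]` and `E[r(-ω_k) F(ω)] = e^{-θ_k} E[F(ω^{(k,-)})]`.
Applied to `F = φ` and `F = φ(·^{(i,i+1)})`, this writes the `i`-th bond term as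
`e^{θ_i}(U_{i+1} - U_i) + e^{-θ_{i+1}}(D_i - D_{i+1})`, with `U_j = E[φ(ω^{(j,+)})]` and
`D_j = E[φ(ω^{(j,-)})]`. Summation by parts over the bonds concludes, since `U_j = D_j = E[φ]`
for `j` outside `[l, r]`.
-/

section SingleSite

variable {r : ℤ → ℝ}

lemma rfact_pos (hr : ∀ z, 0 < r z) (z : ℤ) : 0 < rfact r z :=
  Finset.prod_pos fun _ _ => hr _

lemma rfact_eq_rfact_sub_one_mul (hrel : ∀ z, r z * r (-z + 1) = 1) (z : ℤ) :
    rfact r z = rfact r (z - 1) * r z := by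
  rcases le_or_gt z 0 with hz | hz
  · have hsucc : rfact r (z - 1) = rfact r z * r (-z + 1) := by
      rw [rfact, show (z - 1).natAbs = z.natAbs + 1 by omega, Finset.prod_range_succ, ← rfact,
        show ((z.natAbs : ℤ) + 1) = -z + 1 by omega]
    rw [hsucc, mul_assoc, mul_comm (r _), hrel, mul_one]
  · rw [rfact, show z.natAbs = (z - 1).natAbs + 1 by omega, Finset.prod_range_succ, ← rfact,
      show (((z - 1).natAbs : ℤ) + 1) = z by omega]

lemma mu_nonneg (hr : ∀ z, 0 < r z) (θ : ℝ) (z : ℤ) : 0 ≤ mu r θ z := by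
  have hZ : 0 ≤ Zfun r θ := tsum_nonneg fun z => div_nonneg (Real.exp_nonneg _) (rfact_pos hr z).le
  exact div_nonneg (Real.exp_nonneg _) (mul_nonneg hZ (rfact_pos hr z).le)

lemma rate_mul_mu (hr : ∀ z, 0 < r z) (hrel : ∀ z, r z * r (-z + 1) = 1) (θ : ℝ) (z : ℤ) :
    r z * mu r θ z = Real.exp θ * mu r θ (z - 1) := by
  have hexp : Real.exp (θ * z) = Real.exp θ * Real.exp (θ * ↑(z - 1)) := by
    rw [← Real.exp_add]; push_cast; ring_nf
  have hr0 := (hr z).ne'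
  have hf0 := (rfact_pos hr (z - 1)).ne'
  rcases eq_or_ne (Zfun r θ) 0 with hZ | hZ
  · simp [mu, hZ]
  · rw [mu, mu, rfact_eq_rfact_sub_one_mul hrel, hexp]
    field_simp

lemma rate_neg_mul_mu (hr : ∀ z, 0 < r z) (hrel : ∀ z, r z * r (-z + 1) = 1) (θ : ℝ) (z : ℤ) :
    r (-z) * mu r θ z = Real.exp (-θ) * mu r θ (z + 1) := by
  have hup := rate_mul_mu hr hrel θ (z + 1)
  have hinv : r (-z) * r (z + 1) = 1 := by simpa using hrel (-z)
  rw [add_sub_cancel_right] at hup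
  have hexp : Real.exp (-θ) * Real.exp θ = 1 := by
    rw [← Real.exp_add, neg_add_cancel, Real.exp_zero]
  linear_combination (-(r (-z) * mu r θ z)) * hexp - Real.exp (-θ) * r (-z) * hup
    + Real.exp (-θ) * mu r θ (z + 1) * hinv

end SingleSite

lemma upCfg_eq_add (ω : ℤ → ℤ) (i : ℤ) : upCfg ω i = ω + Pi.single i 1 := by
  ext j
  rcases eq_or_ne j i with rfl | hj <;> simp [upCfg, *]

lemma downCfg_eq_add (ω : ℤ → ℤ) (i : ℤ) : downCfg ω i = ω + Pi.single i (-1) := by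
  ext j
  rcases eq_or_ne j i with rfl | hj <;> simp [downCfg, *, sub_eq_add_neg]

lemma brickCfg_eq_add (ω : ℤ → ℤ) (i : ℤ) :
    brickCfg ω i = ω + Pi.single i (-1) + Pi.single (i + 1) 1 := by
  ext j
  simp only [brickCfg, Pi.add_apply, Pi.single_apply]
  split_ifs <;> subst_vars <;> omega

section CylinderWeights

variable {r θ : ℤ → ℝ} {P : Measure (ℤ → ℤ)} {S : Finset ℤ}

variable (r θ S) in
noncomputable def cylinderWeight (c : S → ℤ) : ℝ := ∏ i : S, mu r (θ i) (c i)

lemma cylinderWeight_nonneg (hr : ∀ z, 0 < r z) (c : S → ℤ) : 0 ≤ cylinderWeight r θ S c :=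
  Finset.prod_nonneg fun _ _ => mu_nonneg hr _ _

lemma cylinderWeight_mul_eq {g : ℤ → ℝ} {s : ℤ} {e : ℝ} (k : S)
    (hg : ∀ z, g z * mu r (θ k) z = e * mu r (θ k) (z - s)) (c : S → ℤ) :
    g (c k) * cylinderWeight r θ S c = e * cylinderWeight r θ S (c - Pi.single k s) := by
  classical
  have hrest : ∏ j ∈ Finset.univ.erase k, mu r (θ j) ((c - Pi.single k s : S → ℤ) j)
      = ∏ j ∈ Finset.univ.erase k, mu r (θ j) (c j) :=
    Finset.prod_congr rfl fun j hj => by simp [Finset.ne_of_mem_erase hj]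
  rw [cylinderWeight, cylinderWeight, ← Finset.mul_prod_erase _ _ (Finset.mem_univ k),
    ← Finset.mul_prod_erase _ _ (Finset.mem_univ k), hrest, ← mul_assoc, hg]
  simp [mul_assoc]

lemma map_restrict_singleton (hr : ∀ z, 0 < r z) (hP : IsProductMeasure r θ P) (c : S → ℤ) :
    P.map (S.restrict : (ℤ → ℤ) → S → ℤ) {c} = ENNReal.ofReal (cylinderWeight r θ S c) := by
  have hcyl : (S.restrict : (ℤ → ℤ) → S → ℤ) ⁻¹' {c}
      = {ω | ∀ i ∈ S, ω i = updateFinset (0 : ℤ → ℤ) S c i} := by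
    ext ω
    simp +contextual [funext_iff, updateFinset]
  rw [Measure.map_apply (Finset.measurable_restrict S) (measurableSet_singleton c), hcyl, hP.2,
    cylinderWeight, ENNReal.ofReal_prod_of_nonneg fun _ _ => mu_nonneg hr _ _,
    ← Finset.prod_coe_sort]
  simp [updateFinset]

lemma summable_cylinderWeight (hr : ∀ z, 0 < r z) (hP : IsProductMeasure r θ P) :
    Summable (cylinderWeight r θ S) := by
  have := hP.1
  have : IsProbabilityMeasure (P.map (S.restrict : (ℤ → ℤ) → S → ℤ)) :=
    Measure.isProbabilityMeasure_map (Finset.measurable_restrict S).aemeasurable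
  have htotal : ∑' c : S → ℤ, ENNReal.ofReal (cylinderWeight r θ S c) = 1 := by
    have h := lintegral_countable' (μ := P.map (S.restrict : (ℤ → ℤ) → S → ℤ)) 1
    simp only [Pi.one_apply, lintegral_one, measure_univ, one_mul] at h
    simp_rw [← map_restrict_singleton hr hP, h]
  refine (ENNReal.summable_toReal (htotal ▸ ENNReal.one_ne_top)).congr fun c => ?_
  exact ENNReal.toReal_ofReal (cylinderWeight_nonneg hr c)

end CylinderWeights

section DependsOn

variable {ι α β : Type*} {F : (ι → α) → β}

lemma DependsOn.apply_updateFinset_restrict [DecidableEq ι] {S : Finset ι} (hF : DependsOn F S)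
    (x ω : ι → α) : F (Function.updateFinset x S (S.restrict ω)) = F ω :=
  hF fun i hi => by simp [Function.updateFinset, Finset.mem_coe.mp hi]

lemma DependsOn.comp_add_right [Add α] {s : Set ι} (hF : DependsOn F s) (v : ι → α) :
    DependsOn (fun ω => F (ω + v)) s :=
  fun ω ω' h => hF fun i hi => by simp [h i hi]

lemma DependsOn.apply_add_single_of_notMem [DecidableEq ι] [AddZeroClass α] {s : Set ι}
    (hF : DependsOn F s) {k : ι} (hk : k ∉ s) (ω : ι → α) (v : α) :
    F (ω + Pi.single k v) = F ω :=
  hF fun i hi => by simp [show i ≠ k by rintro rfl; exact hk hi]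

lemma Function.updateFinset_add_single [DecidableEq ι] [AddZeroClass α] {S : Finset ι} {k : ι}
    (hk : k ∈ S) (x : ι → α) (c : S → α) (v : α) :
    updateFinset x S (c + Pi.single ⟨k, hk⟩ v) = updateFinset x S c + Pi.single k v := by
  ext i
  by_cases hi : i ∈ S
  · simp [updateFinset, hi, Pi.single_apply]
  · simp [updateFinset, hi, show i ≠ k by rintro rfl; exact hi hk]

end DependsOn

section WindowIntegrals

variable {r θ : ℤ → ℝ} {P : Measure (ℤ → ℤ)} {S : Finset ℤ}

lemma integrable_map_restrict (hr : ∀ z, 0 < r z) (hP : IsProductMeasure r θ P)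
    {G : (S → ℤ) → ℝ} (hG : Summable fun c => |G c| * cylinderWeight r θ S c) :
    Integrable G (P.map (S.restrict : (ℤ → ℤ) → S → ℤ)) := by
  refine ⟨(measurable_of_countable G).aestronglyMeasurable, ?_⟩
  have hterm : ∀ c, ‖G c‖ₑ * P.map (S.restrict : (ℤ → ℤ) → S → ℤ) {c}
      = ENNReal.ofReal (|G c| * cylinderWeight r θ S c) := fun c => by
    rw [map_restrict_singleton hr hP, ENNReal.ofReal_mul (abs_nonneg _),
      ← Real.enorm_eq_ofReal_abs]
  rw [HasFiniteIntegral, lintegral_countable', tsum_congr hterm, ← ENNReal.ofReal_tsum_of_nonneg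
    (fun c => mul_nonneg (abs_nonneg _) (cylinderWeight_nonneg hr c)) hG]
  exact ENNReal.ofReal_lt_top

lemma summable_abs_mul_cylinderWeight (hr : ∀ z, 0 < r z) (hP : IsProductMeasure r θ P)
    {G : (S → ℤ) → ℝ} {M : ℝ} (hM : ∀ c, |G c| ≤ M) :
    Summable fun c => |G c| * cylinderWeight r θ S c :=
  .of_nonneg_of_le (fun c => mul_nonneg (abs_nonneg _) (cylinderWeight_nonneg hr c))
    (fun c => mul_le_mul_of_nonneg_right (hM c) (cylinderWeight_nonneg hr c))
    ((summable_cylinderWeight hr hP).mul_left M)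

variable {F : (ℤ → ℤ) → ℝ}

lemma integrable_of_dependsOn (hr : ∀ z, 0 < r z) (hP : IsProductMeasure r θ P)
    (hF : DependsOn F S)
    (hsum : Summable fun c => |F (updateFinset 0 S c)| * cylinderWeight r θ S c) :
    Integrable F P := by
  have hmap := (integrable_map_measure (measurable_of_countable _).aestronglyMeasurable
    (Finset.measurable_restrict (X := fun _ : ℤ => ℤ) S).aemeasurable).mp
      (integrable_map_restrict hr hP hsum)
  simpa [Function.comp_def, DependsOn.apply_updateFinset_restrict hF] using hmap

lemma integral_eq_tsum_of_dependsOn (hr : ∀ z, 0 < r z) (hP : IsProductMeasure r θ P)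
    (hF : DependsOn F S)
    (hsum : Summable fun c => |F (updateFinset 0 S c)| * cylinderWeight r θ S c) :
    ∫ ω, F ω ∂P = ∑' c, F (updateFinset 0 S c) * cylinderWeight r θ S c := by
  let G : (S → ℤ) → ℝ := fun c => F (updateFinset 0 S c)
  calc ∫ ω, F ω ∂P = ∫ ω, G (S.restrict ω) ∂P := by
        simp only [G, DependsOn.apply_updateFinset_restrict hF]
    _ = ∫ c, G c ∂P.map (S.restrict : (ℤ → ℤ) → S → ℤ) :=
        (integral_map (Finset.measurable_restrict _).aemeasurable
          (measurable_of_countable G).aestronglyMeasurable).symm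
    _ = ∑' c, G c * cylinderWeight r θ S c := by
        rw [integral_countable (integrable_map_restrict hr hP hsum)]
        refine tsum_congr fun c => ?_
        rw [measureReal_def, map_restrict_singleton hr hP,
          ENNReal.toReal_ofReal (cylinderWeight_nonneg hr c), smul_eq_mul, mul_comm]

end WindowIntegrals

section ShiftIdentity

variable {r θ : ℤ → ℝ} {P : Measure (ℤ → ℤ)} {S : Finset ℤ} {F : (ℤ → ℤ) → ℝ}

lemma summable_abs_mul_cylinderWeight_of_mul_eq (hr : ∀ z, 0 < r z)
    (hP : IsProductMeasure r θ P) {g : ℤ → ℝ} {s : ℤ} {e : ℝ} (k : S)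
    (hg : ∀ z, g z * mu r (θ k) z = e * mu r (θ k) (z - s)) {G : (S → ℤ) → ℝ} {M : ℝ}
    (hM : ∀ c, |G c| ≤ M) :
    Summable fun c => |g (c k) * G c| * cylinderWeight r θ S c := by
  have hw : ∀ c, 0 ≤ cylinderWeight r θ S c := cylinderWeight_nonneg hr
  refine .of_nonneg_of_le (fun c => mul_nonneg (abs_nonneg _) (hw c)) (fun c => ?_)
    (((Equiv.subRight (Pi.single k s)).summable_iff.mpr
      (summable_cylinderWeight hr hP)).mul_left (|e| * M))
  have hw' := hw (c - Pi.single k s)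
  calc |g (c k) * G c| * cylinderWeight r θ S c
      = |g (c k) * cylinderWeight r θ S c| * |G c| := by
        rw [abs_mul, abs_mul (g _), abs_of_nonneg (hw c)]; ring
    _ = |e| * cylinderWeight r θ S (c - Pi.single k s) * |G c| := by
        rw [cylinderWeight_mul_eq k hg, abs_mul, abs_of_nonneg hw']
    _ ≤ |e| * cylinderWeight r θ S (c - Pi.single k s) * M := by gcongr; exact hM c
    _ = |e| * M * cylinderWeight r θ S (c - Pi.single k s) := by ring

theorem integral_mul_eq_integral_add_single (hr : ∀ z, 0 < r z) (hP : IsProductMeasure r θ P)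
    {k : ℤ} (hk : k ∈ S) (hF : DependsOn F S) {M : ℝ} (hM : ∀ ω, |F ω| ≤ M)
    {g : ℤ → ℝ} {s : ℤ} {e : ℝ} (hg : ∀ z, g z * mu r (θ k) z = e * mu r (θ k) (z - s)) :
    Integrable (fun ω => g (ω k) * F ω) P ∧
      ∫ ω, g (ω k) * F ω ∂P = e * ∫ ω, F (ω + Pi.single k s) ∂P := by
  let k' : S := ⟨k, hk⟩
  have hext : ∀ c : S → ℤ, updateFinset (0 : ℤ → ℤ) S c k = c k' := fun c => by
    simp [updateFinset, hk, k']
  have hgF : DependsOn (fun ω => g (ω k) * F ω) S := fun ω ω' h => by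
    simp only [h k hk, hF h]
  have hsum : Summable fun c : S → ℤ =>
      |g (updateFinset (0 : ℤ → ℤ) S c k) * F (updateFinset 0 S c)| * cylinderWeight r θ S c := by
    simpa only [hext] using summable_abs_mul_cylinderWeight_of_mul_eq hr hP k' hg
      (G := fun c => F (updateFinset 0 S c)) fun _ => hM _
  have hshift := integral_eq_tsum_of_dependsOn hr hP (hF.comp_add_right (Pi.single k s))
    (summable_abs_mul_cylinderWeight hr hP fun _ => hM _)
  refine ⟨integrable_of_dependsOn hr hP hgF hsum, ?_⟩
  rw [integral_eq_tsum_of_dependsOn hr hP hgF hsum, hshift, ← tsum_mul_left,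
    ← (Equiv.addRight (Pi.single k' s)).tsum_eq]
  refine tsum_congr fun c => ?_
  have := cylinderWeight_mul_eq k' hg (c + Pi.single k' s)
  rw [add_sub_cancel_right] at this
  have hupd : updateFinset (0 : ℤ → ℤ) S (c + Pi.single k' s) =
      updateFinset (0 : ℤ → ℤ) S c + Pi.single k s :=
    updateFinset_add_single hk 0 c s
  rw [Equiv.coe_addRight, hext, hupd, mul_right_comm, this]
  ring

end ShiftIdentity

section Generator

variable {r θ : ℤ → ℝ} {P : Measure (ℤ → ℤ)} {S : Finset ℤ} {F : (ℤ → ℤ) → ℝ}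

theorem integral_bond_generator (hr : ∀ z, 0 < r z) (hrel : ∀ z, r z * r (-z + 1) = 1)
    (hP : IsProductMeasure r θ P) {i : ℤ} (hi : i ∈ S) (hi₁ : i + 1 ∈ S) (hF : DependsOn F S)
    {M : ℝ} (hM : ∀ ω, |F ω| ≤ M) :
    Integrable (fun ω => (r (ω i) + r (-(ω (i + 1)))) * (F (brickCfg ω i) - F ω)) P ∧
      ∫ ω, (r (ω i) + r (-(ω (i + 1)))) * (F (brickCfg ω i) - F ω) ∂P
        = Real.exp (θ i) * ((∫ ω, F (upCfg ω (i + 1)) ∂P) - ∫ ω, F (upCfg ω i) ∂P)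
          + Real.exp (-θ (i + 1))
            * ((∫ ω, F (downCfg ω i) ∂P) - ∫ ω, F (downCfg ω (i + 1)) ∂P) := by
  set v : ℤ → ℤ := Pi.single i (-1) + Pi.single (i + 1) 1
  have hFv : DependsOn (fun ω => F (ω + v)) S := hF.comp_add_right v
  have hMv : ∀ ω, |F (ω + v)| ≤ M := fun ω => hM _
  have hdown : ∀ z, r (-z) * mu r (θ (i + 1)) z
      = Real.exp (-θ (i + 1)) * mu r (θ (i + 1)) (z - -1) := fun z => by
    rw [sub_neg_eq_add, rate_neg_mul_mu hr hrel]
  obtain ⟨h₁, e₁⟩ := integral_mul_eq_integral_add_single hr hP hi hFv hMv (rate_mul_mu hr hrel _)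
  obtain ⟨h₂, e₂⟩ := integral_mul_eq_integral_add_single hr hP hi hF hM (rate_mul_mu hr hrel _)
  obtain ⟨h₃, e₃⟩ := integral_mul_eq_integral_add_single hr hP hi₁ hFv hMv hdown
  obtain ⟨h₄, e₄⟩ := integral_mul_eq_integral_add_single hr hP hi₁ hF hM hdown
  have hexpand : (fun ω => (r (ω i) + r (-(ω (i + 1)))) * (F (ω + v) - F ω))
      = fun ω => (r (ω i) * F (ω + v) - r (ω i) * F ω)
        + (r (-(ω (i + 1))) * F (ω + v) - r (-(ω (i + 1))) * F ω) := by
    funext ω; ring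
  have hv₁ : ∀ ω : ℤ → ℤ, ω + Pi.single i 1 + v = ω + Pi.single (i + 1) 1 := fun ω => by
    simp only [v, Pi.single_neg]; abel
  have hv₂ : ∀ ω : ℤ → ℤ, ω + Pi.single (i + 1) (-1) + v = ω + Pi.single i (-1) := fun ω => by
    simp only [v, Pi.single_neg]; abel
  have hbrick : ∀ ω, brickCfg ω i = ω + v := fun ω => by rw [brickCfg_eq_add, add_assoc]
  simp only [hv₁, hv₂] at e₁ e₃
  simp only [hbrick, upCfg_eq_add, downCfg_eq_add, hexpand]
  have h₁₂ : Integrable (fun ω => r (ω i) * F (ω + v) - r (ω i) * F ω) P := h₁.sub h₂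
  have h₃₄ : Integrable (fun ω => r (-(ω (i + 1))) * F (ω + v) - r (-(ω (i + 1))) * F ω) P :=
    h₃.sub h₄
  refine ⟨h₁₂.add h₃₄, ?_⟩
  rw [integral_add h₁₂ h₃₄, integral_sub h₁ h₂, integral_sub h₃ h₄, e₁, e₂, e₃, e₄]
  ring

end Generator

section SummationByParts

variable {R : Type*} [CommRing R]

lemma sum_Icc_mul_sub_eq (f U : ℤ → R) {m n : ℤ} (hmn : m ≤ n) :
    ∑ i ∈ Finset.Icc m n, f i * (U (i + 1) - U i)
      = ∑ i ∈ Finset.Icc m (n - 1), (f i - f (i + 1)) * U (i + 1)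
        + f n * U (n + 1) - f m * U m := by
  induction n, hmn using Int.leInduction with
  | base => simp [mul_sub]
  | succ n hmn ih =>
    rw [← Finset.insert_Icc_right_eq_Icc_add_one (by omega), Finset.sum_insert (by simp), ih,
      add_sub_cancel_right, ← Finset.insert_Icc_sub_one_right_eq_Icc hmn,
      Finset.sum_insert (by simp)]
    ring

lemma sum_Icc_mul_sub_eq_of_boundary (f U : ℤ → R) {m n : ℤ} (hmn : m ≤ n) {c : R}
    (hm : U m = c) (hn : U (n + 1) = c) :
    ∑ i ∈ Finset.Icc m n, f i * (U (i + 1) - U i)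
      = ∑ i ∈ Finset.Icc m (n - 1), (f i - f (i + 1)) * (U (i + 1) - c) := by
  simpa [hm, hn] using sum_Icc_mul_sub_eq f (fun j => U j - c) hmn

lemma sum_Icc_mul_sub_eq_of_boundary' (g D : ℤ → R) {m n : ℤ} (hmn : m ≤ n) {c : R}
    (hm : D m = c) (hn : D (n + 1) = c) :
    ∑ i ∈ Finset.Icc m n, g (i + 1) * (D i - D (i + 1))
      = ∑ i ∈ Finset.Icc (m + 2) (n + 1), (g i - g (i - 1)) * (D (i - 1) - c) := by
  have hshift : Finset.Icc (m + 2) (n + 1) = (Finset.Icc m (n - 1)).map (addRightEmbedding 2) := by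
    rw [Finset.map_add_right_Icc, sub_add]; norm_num
  calc ∑ i ∈ Finset.Icc m n, g (i + 1) * (D i - D (i + 1))
      = ∑ i ∈ Finset.Icc m n, -g (i + 1) * (D (i + 1) - D i) :=
        Finset.sum_congr rfl fun _ _ => by ring
    _ = ∑ i ∈ Finset.Icc m (n - 1), (-g (i + 1) - -g (i + 1 + 1)) * (D (i + 1) - c) :=
        sum_Icc_mul_sub_eq_of_boundary _ _ hmn hm hn
    _ = _ := by
        rw [hshift, Finset.sum_map]
        refine Finset.sum_congr rfl fun i _ => ?_
        rw [addRightEmbedding_apply, show i + 2 - 1 = i + 1 by ring, show i + 2 = i + 1 + 1 by ring]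
        ring

end SummationByParts

theorem generator_identity_general (r : ℤ → ℝ) (hpos : ∀ z : ℤ, 0 < r z)
    (hrel : ∀ z : ℤ, r z * r (-z + 1) = 1)
    (θv : ℤ → ℝ)
    (P : Measure (ℤ → ℤ)) (hP : IsProductMeasure r θv P)
    (φ : (ℤ → ℤ) → ℝ) (hbdd : ∃ M : ℝ, ∀ ω, |φ ω| ≤ M)
    (a b : ℤ) (hab : a ≤ b)
    (hdep : ∀ ω ω' : ℤ → ℤ, (∀ i : ℤ, a ≤ i → i ≤ b → ω i = ω' i) → φ ω = φ ω') :
    (∀ i ∈ Finset.Icc (a - 1) b,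
      Integrable (fun ω : ℤ → ℤ =>
        (r (ω i) + r (-(ω (i + 1)))) * (φ (brickCfg ω i) - φ ω)) P) ∧
    Integrable φ P ∧
    (∑ i ∈ Finset.Icc (a - 1) b,
        ∫ ω, (r (ω i) + r (-(ω (i + 1)))) * (φ (brickCfg ω i) - φ ω) ∂P)
      = (∑ i ∈ Finset.Icc (a - 1) (b - 1),
          (Real.exp (θv i) - Real.exp (θv (i + 1))) *
            ((∫ ω, φ (upCfg ω (i + 1)) ∂P) - ∫ ω, φ ω ∂P))
        + ∑ i ∈ Finset.Icc (a + 1) (b + 1),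
            (Real.exp (-θv i) - Real.exp (-θv (i - 1))) *
              ((∫ ω, φ (downCfg ω (i - 1)) ∂P) - ∫ ω, φ ω ∂P) := by
  obtain ⟨M, hM⟩ := hbdd
  have hφ : DependsOn φ (Finset.Icc a b) := fun ω ω' h =>
    hdep ω ω' fun i hai hib => h i (by simp [hai, hib])
  have hφS : DependsOn φ (Finset.Icc (a - 1) (b + 1)) :=
    hφ.mono (Finset.coe_subset.mpr (Finset.Icc_subset_Icc (by omega) (by omega)))
  have hbond := fun i (hi : i ∈ Finset.Icc (a - 1) b) =>
    integral_bond_generator hpos hrel hP (S := Finset.Icc (a - 1) (b + 1)) (i := i)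
      (by simp at hi ⊢; omega) (by simp at hi ⊢; omega) hφS hM
  have houter : ∀ j ∉ Finset.Icc a b, ∀ s, ∫ ω, φ (ω + Pi.single j s) ∂P = ∫ ω, φ ω ∂P :=
    fun j hj s => by simp only [hφ.apply_add_single_of_notMem hj]
  have hUp : ∀ j ∉ Finset.Icc a b, ∫ ω, φ (upCfg ω j) ∂P = ∫ ω, φ ω ∂P := fun j hj => by
    simp only [upCfg_eq_add, houter j hj]
  have hDown : ∀ j ∉ Finset.Icc a b, ∫ ω, φ (downCfg ω j) ∂P = ∫ ω, φ ω ∂P := fun j hj => by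
    simp only [downCfg_eq_add, houter j hj]
  refine ⟨fun i hi => (hbond i hi).1, integrable_of_dependsOn hpos hP hφS
    (summable_abs_mul_cylinderWeight hpos hP fun _ => hM _), ?_⟩
  rw [Finset.sum_congr rfl fun i hi => (hbond i hi).2, Finset.sum_add_distrib,
    sum_Icc_mul_sub_eq_of_boundary (fun i => Real.exp (θv i)) (fun j => ∫ ω, φ (upCfg ω j) ∂P)
      (by omega) (hUp _ (by simp)) (hUp _ (by simp)),
    sum_Icc_mul_sub_eq_of_boundary' (fun i => Real.exp (-θv i)) (fun j => ∫ ω, φ (downCfg ω j) ∂P)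
      (by omega) (hDown _ (by simp)) (hDown _ (by simp)), show a - 1 + 2 = a + 1 by ring]

theorem generator_identity (r : ℤ → ℝ) (hpos : ∀ z : ℤ, 0 < r z)
    (hrel : ∀ z : ℤ, r z * r (-z + 1) = 1)
    (θv : ℤ → ℝ) (hZ : ∀ i : ℤ, Summable (fun z : ℤ => Real.exp (θv i * z) / rfact r z))
    (P : Measure (ℤ → ℤ)) (hP : IsProductMeasure r θv P)
    (φ : (ℤ → ℤ) → ℝ) (hmeas : Measurable φ) (hbdd : ∃ M : ℝ, ∀ ω, |φ ω| ≤ M)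
    (a b : ℤ) (hab : a ≤ b)
    (hdep : ∀ ω ω' : ℤ → ℤ, (∀ i : ℤ, a ≤ i → i ≤ b → ω i = ω' i) → φ ω = φ ω') :
    (∀ i ∈ Finset.Icc (a - 1) b,
      Integrable (fun ω : ℤ → ℤ =>
        (r (ω i) + r (-(ω (i + 1)))) * (φ (brickCfg ω i) - φ ω)) P) ∧
    Integrable φ P ∧
    (∑ i ∈ Finset.Icc (a - 1) b,
        ∫ ω, (r (ω i) + r (-(ω (i + 1)))) * (φ (brickCfg ω i) - φ ω) ∂P)
      = (∑ i ∈ Finset.Icc (a - 1) (b - 1),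
          (Real.exp (θv i) - Real.exp (θv (i + 1))) *
            ((∫ ω, φ (upCfg ω (i + 1)) ∂P) - ∫ ω, φ ω ∂P))
        + ∑ i ∈ Finset.Icc (a + 1) (b + 1),
            (Real.exp (-θv i) - Real.exp (-θv (i - 1))) *
              ((∫ ω, φ (downCfg ω (i - 1)) ∂P) - ∫ ω, φ ω ∂P) :=
  generator_identity_general r hpos hrel θv P hP φ hbdd a b hab hdep
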